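/- arXiv:2605.21104 — 5 statements merged into one kernel-verified Lean document; each statement's English description precedes it below -/
import Mathlib

section
/- Linear convergence of mirror flow under the PL inequality and inverse coercivity: let L : ℝⁿ → ℝ be continuously differentiable with L ≥ 0 and satisfying the PL inequality ‖∇L(x)‖₂² ≥ 2Λ·L(x) for all x, for some Λ > 0. Let A assign to each x ∈ ℝⁿ a linear map A(x) : ℝⁿ → ℝⁿ satisfying ⟨ξ, A(x)·ξ⟩ ≥ μ‖ξ‖₂² for all ξ, for some μ > 0. If θ : [0, ∞) → ℝⁿ is differentiable with θ'(t) = −A(θ(t))·∇L(θ(t)) for all t ≥ 0, then L(θ(t)) ≤ L(θ(0))·exp(−2μΛ·t) for all t ≥ 0. -/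
open scoped RealInnerProductSpace

/-! Along the flow, `d/dt L(θ) = -⟪∇L, A ∇L⟫ ≤ -μ ‖∇L‖² ≤ -2μΛ L(θ)`, and Grönwall's inequality
turns this differential inequality into exponential decay. -/

open Real Set

theorem le_mul_exp_of_hasDerivAt_le_neg_mul {f f' : ℝ → ℝ} {c : ℝ}
    (hf : ∀ t, 0 ≤ t → HasDerivAt f (f' t) t) (hbound : ∀ t, 0 ≤ t → f' t ≤ -c * f t)
    {t : ℝ} (ht : 0 ≤ t) : f t ≤ f 0 * exp (-(c * t)) := by
  have hcont : ContinuousOn f (Icc 0 t) := fun s hs => (hf s hs.1).continuousAt.continuousWithinAt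
  have := le_gronwallBound_of_liminf_deriv_right_le (δ := f 0) (K := -c) (ε := 0) hcont
    (fun s hs _ hr => (hf s hs.1).hasDerivWithinAt.liminf_right_slope_le hr) le_rfl
    (fun s hs => by simpa using hbound s hs.1) t ⟨ht, le_rfl⟩
  simpa [gronwallBound_ε0] using this

theorem HasGradientAt.comp_hasDerivAt {E : Type*} [NormedAddCommGroup E] [InnerProductSpace ℝ E]
    [CompleteSpace E] {L : E → ℝ} {g v : E} {θ : ℝ → E} {t : ℝ}
    (hL : HasGradientAt L g (θ t)) (hθ : HasDerivAt θ v t) : HasDerivAt (L ∘ θ) ⟪g, v⟫ t :=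
  hL.hasFDerivAt.comp_hasDerivAt t hθ

theorem inner_neg_le_of_coercive_of_PL {E : Type*} [NormedAddCommGroup E]
    [InnerProductSpace ℝ E] {g w : E} {l μ Λ : ℝ} (hμ : 0 ≤ μ)
    (hw : μ * ‖g‖ ^ 2 ≤ ⟪g, w⟫) (hPL : 2 * Λ * l ≤ ‖g‖ ^ 2) :
    ⟪g, -w⟫ ≤ -(2 * μ * Λ) * l := by
  rw [inner_neg_right]
  nlinarith [mul_le_mul_of_nonneg_left hPL hμ]

theorem mirror_flow_linear_convergence_general (n : ℕ)
    (L : EuclideanSpace ℝ (Fin n) → ℝ) (hL : ContDiff ℝ 1 L)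
    (Λ : ℝ)
    (hPL : ∀ x, 2 * Λ * L x ≤ ‖gradient L x‖ ^ 2)
    (A : EuclideanSpace ℝ (Fin n) →
      (EuclideanSpace ℝ (Fin n) →L[ℝ] EuclideanSpace ℝ (Fin n)))
    (μ : ℝ) (hμ : 0 < μ)
    (hA : ∀ x ξ, μ * ‖ξ‖ ^ 2 ≤ ⟪ξ, A x ξ⟫)
    (θ : ℝ → EuclideanSpace ℝ (Fin n))
    (hθ : ∀ t : ℝ, 0 ≤ t → HasDerivAt θ (-(A (θ t) (gradient L (θ t)))) t) :
    ∀ t : ℝ, 0 ≤ t → L (θ t) ≤ L (θ 0) * Real.exp (-(2 * μ * Λ * t)) := by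
  have hgrad : ∀ x, HasGradientAt L (gradient L x) x := fun x =>
    ((hL.differentiable one_ne_zero) x).hasGradientAt
  intro t ht
  exact le_mul_exp_of_hasDerivAt_le_neg_mul (f := L ∘ θ)
    (fun s hs => (hgrad (θ s)).comp_hasDerivAt (hθ s hs))
    (fun s _ => inner_neg_le_of_coercive_of_PL hμ.le (hA _ _) (hPL _)) ht

/-- Linear convergence of mirror flow under the PL inequality and inverse coercivity:
if `L : ℝⁿ → ℝ` is `C¹`, nonnegative and satisfies the PL inequality
`‖∇L(x)‖² ≥ 2Λ L(x)`, and `A` assigns to each point a linear map with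
`⟪ξ, A(x) ξ⟫ ≥ μ ‖ξ‖²`, then any solution of the mirror flow `θ' = -A(θ) ∇L(θ)` on
`[0, ∞)` satisfies `L(θ(t)) ≤ L(θ(0)) exp (-2 μ Λ t)`. -/
theorem mirror_flow_linear_convergence (n : ℕ)
    (L : EuclideanSpace ℝ (Fin n) → ℝ) (hL : ContDiff ℝ 1 L)
    (hL0 : ∀ x, 0 ≤ L x)
    (Λ : ℝ) (hΛ : 0 < Λ)
    (hPL : ∀ x, 2 * Λ * L x ≤ ‖gradient L x‖ ^ 2)
    (A : EuclideanSpace ℝ (Fin n) →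
      (EuclideanSpace ℝ (Fin n) →L[ℝ] EuclideanSpace ℝ (Fin n)))
    (μ : ℝ) (hμ : 0 < μ)
    (hA : ∀ x ξ, μ * ‖ξ‖ ^ 2 ≤ ⟪ξ, A x ξ⟫)
    (θ : ℝ → EuclideanSpace ℝ (Fin n))
    (hθ : ∀ t : ℝ, 0 ≤ t → HasDerivAt θ (-(A (θ t) (gradient L (θ t)))) t) :
    ∀ t : ℝ, 0 ≤ t → L (θ t) ≤ L (θ 0) * Real.exp (-(2 * μ * Λ * t)) :=
  mirror_flow_linear_convergence_general n L hL Λ hPL A μ hμ hA θ hθ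
end

section
/- Equivalence of the reparameterized and L1 max-margin problems: let p ≥ 1 be a natural number, let (x_j, y_j) for j = 1, …, K be data with x_j ∈ ℝⁿ and y_j ∈ {±1}, and suppose the feasible set {θ ∈ ℝⁿ : y_j⟨θ, x_j⟩ ≥ 1 for all j} is nonempty. Then the infimum of (1/2)·Σ_{i=1}^p Σ_{k=1}^n |w_{i,k}|^p over all tuples (w₁, …, w_p) ∈ (ℝⁿ)^p whose coordinatewise product θ_k = Π_i w_{i,k} satisfies y_j⟨θ, x_j⟩ ≥ 1 for all j equals the infimum of (p/2)·‖θ‖₁ over all θ ∈ ℝⁿ with y_j⟨θ, x_j⟩ ≥ 1 for all j. -/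
-- AM-GM: p * ∏|v i| ≤ ∑ |v i|^p
lemma amgm_aux (p : ℕ) (hp : 1 ≤ p) (v : Fin p → ℝ) :
    (p : ℝ) * |∏ i, v i| ≤ ∑ i, |v i| ^ p := by
  have hp0 : (0:ℝ) < p := by exact_mod_cast hp
  have h := Real.geom_mean_le_arith_mean_weighted Finset.univ
    (fun _ : Fin p => 1 / (p:ℝ)) (fun i => |v i| ^ p)
    (fun i _ => by positivity)
    (by simp [Finset.sum_const, mul_comm]; field_simp)
    (fun i _ => by positivity)
  have hL : ∏ i, (|v i| ^ p) ^ (1 / (p:ℝ)) = ∏ i, |v i| := by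
    apply Finset.prod_congr rfl
    intro i _
    rw [← Real.rpow_natCast |v i| p, ← Real.rpow_mul (abs_nonneg _)]
    rw [mul_one_div, div_self (ne_of_gt hp0), Real.rpow_one]
  rw [hL] at h
  rw [Finset.abs_prod]
  calc (p:ℝ) * ∏ i, |v i| ≤ (p:ℝ) * ∑ i, (1/(p:ℝ)) * |v i| ^ p := by
        apply mul_le_mul_of_nonneg_left h (le_of_lt hp0)
    _ = ∑ i, |v i| ^ p := by
        rw [← Finset.mul_sum]
        field_simp

-- balanced factorization
lemma balanced_aux (p n : ℕ) (hp : 1 ≤ p) (θ : Fin n → ℝ) :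
    ∃ w : Fin p → Fin n → ℝ, (∀ k, ∏ i, w i k = θ k) ∧
      ∑ i : Fin p, ∑ k, |w i k| ^ p = (p:ℝ) * ∑ k, |θ k| := by
  have hp0 : (0:ℝ) < p := by exact_mod_cast hp
  haveI : NeZero p := ⟨Nat.one_le_iff_ne_zero.mp hp⟩
  refine ⟨fun i k => (if i = (0:Fin p) then Real.sign (θ k) else 1) * |θ k| ^ ((p:ℝ)⁻¹), ?_, ?_⟩
  · intro k
    rw [Finset.prod_mul_distrib, Finset.prod_const, Finset.prod_ite_eq']
    simp only [Finset.mem_univ, if_true, Finset.card_univ, Fintype.card_fin]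
    rw [← Real.rpow_natCast (|θ k| ^ ((p:ℝ)⁻¹)) p, ← Real.rpow_mul (abs_nonneg _)]
    rw [inv_mul_cancel₀ (ne_of_gt hp0), Real.rpow_one]
    rcases lt_trichotomy (θ k) 0 with h | h | h
    · rw [Real.sign_of_neg h, abs_of_neg h]; ring
    · simp [h, Real.sign_zero]
    · rw [Real.sign_of_pos h, abs_of_pos h]; ring
  · have hperk : ∀ i k, |(if i = (0:Fin p) then Real.sign (θ k) else 1) * |θ k| ^ ((p:ℝ)⁻¹)| ^ p
        = |θ k| := by
      intro i k
      by_cases h0 : θ k = 0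
      · simp [h0, Real.zero_rpow (by positivity : ((p:ℝ)⁻¹) ≠ 0), zero_pow (Nat.one_le_iff_ne_zero.mp hp)]
      · have hs : |if i = (0:Fin p) then Real.sign (θ k) else 1| = 1 := by
          split
          · rcases lt_or_gt_of_ne (fun h => h0 h.symm) with h | h
            · simp [Real.sign_of_pos h]
            · simp [Real.sign_of_neg h]
          · simp
        rw [abs_mul, hs, one_mul, abs_of_nonneg (Real.rpow_nonneg (abs_nonneg _) _)]
        rw [← Real.rpow_natCast (|θ k| ^ ((p:ℝ)⁻¹)) p, ← Real.rpow_mul (abs_nonneg _)]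
        rw [inv_mul_cancel₀ (ne_of_gt hp0), Real.rpow_one]
    simp only [hperk]
    rw [Finset.sum_const, Finset.card_univ, Fintype.card_fin, nsmul_eq_mul]



/-- Equivalence of the reparameterized and `L1` max-margin problems: for `p ≥ 1` and
linearly separable data `(x_j, y_j)` with `y_j ∈ {±1}` and nonempty feasible set
`{θ : y_j ⟨θ, x_j⟩ ≥ 1 ∀ j}`, the infimum of `(1/2) ∑ i ∑ k |w_{i,k}|^p` over all tuples
`(w₁, …, w_p)` whose coordinatewise product `θ_k = ∏ i w_{i,k}` satisfies the margin
constraints equals the infimum of `(p/2) ‖θ‖₁` over all feasible `θ`. -/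
theorem reparameterized_eq_L1_max_margin (p n K : ℕ) (hp : 1 ≤ p)
    (x : Fin K → Fin n → ℝ) (y : Fin K → ℝ) (hy : ∀ j, y j = 1 ∨ y j = -1)
    (hfeas : ∃ θ : Fin n → ℝ, ∀ j, 1 ≤ y j * ∑ k, θ k * x j k) :
    sInf {c : ℝ | ∃ w : Fin p → Fin n → ℝ,
        (∀ j, 1 ≤ y j * ∑ k, (∏ i, w i k) * x j k) ∧
        c = (1 / 2) * ∑ i, ∑ k, |w i k| ^ p} =
      sInf {c : ℝ | ∃ θ : Fin n → ℝ,
        (∀ j, 1 ≤ y j * ∑ k, θ k * x j k) ∧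
        c = ((p : ℝ) / 2) * ∑ k, |θ k|} := by
  set A := {c : ℝ | ∃ w : Fin p → Fin n → ℝ,
        (∀ j, 1 ≤ y j * ∑ k, (∏ i, w i k) * x j k) ∧
        c = (1 / 2) * ∑ i, ∑ k, |w i k| ^ p} with hA
  set B := {c : ℝ | ∃ θ : Fin n → ℝ,
        (∀ j, 1 ≤ y j * ∑ k, θ k * x j k) ∧
        c = ((p : ℝ) / 2) * ∑ k, |θ k|} with hB
  have hBA : B ⊆ A := by
    rintro c ⟨θ, hθ, rfl⟩
    obtain ⟨w, hw1, hw2⟩ := balanced_aux p n hp θ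
    refine ⟨w, ?_, ?_⟩
    · intro j; simpa only [hw1] using hθ j
    · rw [hw2]; ring
  have hBne : B.Nonempty := by
    obtain ⟨θ, hθ⟩ := hfeas
    exact ⟨_, θ, hθ, rfl⟩
  have hAne : A.Nonempty := hBne.mono hBA
  have hAbdd : BddBelow A := by
    refine ⟨0, ?_⟩
    rintro c ⟨w, _, rfl⟩
    positivity
  have hBbdd : BddBelow B := by
    refine ⟨0, ?_⟩
    rintro c ⟨θ, _, rfl⟩
    positivity
  apply le_antisymm
  · exact csInf_le_csInf hAbdd hBne hBA
  · apply le_csInf hAne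
    rintro c ⟨w, hw, rfl⟩
    have hfeasθ : ∀ j, 1 ≤ y j * ∑ k, (fun k => ∏ i, w i k) k * x j k := hw
    have hmem : ((p : ℝ) / 2) * ∑ k, |∏ i, w i k| ∈ B := ⟨fun k => ∏ i, w i k, hfeasθ, rfl⟩
    refine le_trans (csInf_le hBbdd hmem) ?_
    have key : (p:ℝ) * ∑ k, |∏ i, w i k| ≤ ∑ i, ∑ k, |w i k| ^ p := by
      rw [Finset.mul_sum, Finset.sum_comm]
      exact Finset.sum_le_sum fun k _ => amgm_aux p hp (fun i => w i k)
    linarith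
end

section
/- Algebraic identity for the balanced steepest L_p flow: let p ≥ 2 be a natural number, q = p/(p−1) (so that 1/p + 1/q = 1), θ ∈ ℝ nonzero, and let w₁, …, w_p ∈ ℝ satisfy Π_{i=1}^p wᵢ = θ and |wᵢ| = |θ|^{1/p} for every i. Then for every h ∈ ℝ, Σ_{i=1}^p (θ/wᵢ)·sgn((θ/wᵢ)·h)·|(θ/wᵢ)·h|^{q−1} = p·|θ|·sgn(h)·|h|^{q−1}. -/
lemma sign_mul' (a b : ℝ) : Real.sign (a * b) = Real.sign a * Real.sign b := by
  rcases lt_trichotomy a 0 with ha | ha | ha <;>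
    rcases lt_trichotomy b 0 with hb | hb | hb <;>
    simp [Real.sign_of_pos, Real.sign_of_neg, ha, hb, mul_pos, mul_neg_of_pos_of_neg,
      mul_neg_of_neg_of_pos, mul_pos_of_neg_of_neg]

lemma mul_sign' (a : ℝ) : a * Real.sign a = |a| := by
  rcases lt_trichotomy a 0 with ha | ha | ha <;>
    simp [Real.sign_of_pos, Real.sign_of_neg, ha, abs_of_pos, abs_of_neg, ha.le]

/-- Algebraic identity for the balanced steepest `L_p` flow: for `p ≥ 2`,
`q = p/(p-1)`, `θ ≠ 0` and balanced factors `w₁, …, w_p ∈ ℝ` with `∏ i, wᵢ = θ` and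
`|wᵢ| = |θ|^(1/p)`, one has for every `h ∈ ℝ`:
`∑ i, (θ/wᵢ) * sgn ((θ/wᵢ) h) * |(θ/wᵢ) h|^(q-1) = p |θ| sgn h |h|^(q-1)`. -/
theorem balanced_steepest_Lp_flow_identity (p : ℕ) (hp : 2 ≤ p) (q : ℝ)
    (hq : q = (p : ℝ) / ((p : ℝ) - 1)) (θ : ℝ) (hθ : θ ≠ 0) (w : Fin p → ℝ)
    (hprod : ∏ i, w i = θ) (hbal : ∀ i, |w i| = |θ| ^ ((1 : ℝ) / (p : ℝ))) :
    ∀ h : ℝ,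
      ∑ i, (θ / w i) * Real.sign ((θ / w i) * h) * |(θ / w i) * h| ^ (q - 1) =
        (p : ℝ) * |θ| * Real.sign h * |h| ^ (q - 1) := by
  intro h
  have hpR : (2 : ℝ) ≤ (p : ℝ) := by exact_mod_cast hp
  have hp1 : (p : ℝ) - 1 ≠ 0 := by linarith
  have hp0 : (p : ℝ) ≠ 0 := by linarith
  have hθ' : 0 < |θ| := abs_pos.2 hθ
  have hw : ∀ i, w i ≠ 0 := by
    intro i h0
    have := hbal i
    rw [h0, abs_zero] at this
    exact absurd this.symm (ne_of_gt (Real.rpow_pos_of_pos hθ' _))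
  have habs : ∀ i, |θ / w i| = |θ| ^ (1 - 1 / (p : ℝ)) := by
    intro i
    rw [abs_div, hbal i, Real.rpow_sub hθ', Real.rpow_one]
  have hexp : (1 - 1 / (p : ℝ)) * q = 1 := by
    rw [hq]; field_simp
  have key : ∀ i : Fin p,
      (θ / w i) * Real.sign ((θ / w i) * h) * |(θ / w i) * h| ^ (q - 1) =
        |θ| * Real.sign h * |h| ^ (q - 1) := by
    intro i
    set a := θ / w i with ha
    have ha0 : a ≠ 0 := div_ne_zero hθ (hw i)
    have haabs : 0 < |a| := abs_pos.2 ha0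
    rw [sign_mul', abs_mul,
      Real.mul_rpow (abs_nonneg a) (abs_nonneg h)]
    have : a * (Real.sign a * Real.sign h) * (|a| ^ (q - 1) * |h| ^ (q - 1)) =
        (|a| * |a| ^ (q - 1)) * Real.sign h * |h| ^ (q - 1) := by
      rw [← mul_sign' a]; ring
    rw [this]
    congr 1
    congr 1
    have : |a| * |a| ^ (q - 1) = |a| ^ q := by
      nth_rewrite 1 [← Real.rpow_one |a|]
      rw [← Real.rpow_add haabs]; norm_num
    rw [this, habs i, ← Real.rpow_mul (le_of_lt hθ'), hexp, Real.rpow_one]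
  rw [Finset.sum_congr rfl (fun i _ => key i)]
  rw [Finset.sum_const, Finset.card_univ, Fintype.card_fin, nsmul_eq_mul]
  ring
end

section
/- Horizon asymptotics of the hyperbolic entropy (L1 bias): for every γ > 0 and every θ ∈ ℝ, the limit lim_{η → 0⁺} η·r_γ(θ/η) / log(1/η) equals |θ|, where r_γ(x) = x·arcsinh(x/γ) − √(x² + γ²). -/
/-!
Since `arsinh` is odd, `θ · arsinh (θ / b) = |θ| · log ((|θ| + √(θ² + b²)) / b)`. Taking `b = ηγ`,
`η · r_γ(θ/η) = |θ| · log (1/η) + R(η)` with a remainder `R` that is continuous at `η = 0`,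
so dividing by `log (1/η) → ∞` leaves `|θ|`.
-/

open Filter Topology Real

noncomputable def hyperbolicEntropy (γ x : ℝ) : ℝ :=
  x * arsinh (x / γ) - √(x ^ 2 + γ ^ 2)

lemma mul_arsinh_div (θ : ℝ) {b : ℝ} (hb : 0 < b) :
    θ * arsinh (θ / b) = |θ| * log ((|θ| + √(θ ^ 2 + b ^ 2)) / b) := by
  have h_even : θ * arsinh (θ / b) = |θ| * arsinh (|θ| / b) := by
    rcases abs_cases θ with ⟨h, -⟩ | ⟨h, -⟩
    · rw [h]
    · rw [h, neg_div, arsinh_neg, neg_mul_neg]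
  have h_sqrt : √(1 + (|θ| / b) ^ 2) = √(θ ^ 2 + b ^ 2) / b := by
    rw [div_pow, sq_abs, ← sqrt_sq hb.le, ← sqrt_div' _ (sq_nonneg b), sqrt_sq hb.le]
    congr 1
    field_simp
    ring
  rw [h_even, arsinh, h_sqrt, ← add_div]

lemma mul_hyperbolicEntropy_div {γ η : ℝ} (hγ : 0 < γ) (hη : 0 < η) (θ : ℝ) :
    η * hyperbolicEntropy γ (θ / η) = |θ| * log (1 / η) +
      (|θ| * log ((|θ| + √(θ ^ 2 + (γ * η) ^ 2)) / γ) - √(θ ^ 2 + (γ * η) ^ 2)) := by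
  have h_arsinh : θ * arsinh (θ / η / γ) =
      |θ| * (log (1 / η) + log ((|θ| + √(θ ^ 2 + (γ * η) ^ 2)) / γ)) := by
    rw [div_div, mul_comm η γ, mul_arsinh_div θ (by positivity),
      ← log_mul (by positivity) (by positivity)]
    congr 2
    field_simp
  have h_sqrt : η * √((θ / η) ^ 2 + γ ^ 2) = √(θ ^ 2 + (γ * η) ^ 2) := by
    rw [← sqrt_sq hη.le, ← sqrt_mul (sq_nonneg η), sqrt_sq hη.le]
    congr 1
    field_simp
  rw [hyperbolicEntropy, mul_sub, h_sqrt, ← mul_assoc, mul_div_cancel₀ θ hη.ne', h_arsinh]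
  ring

lemma continuousAt_hyperbolicEntropy_remainder {γ : ℝ} (hγ : γ ≠ 0) (θ : ℝ) :
    ContinuousAt (fun η : ℝ =>
      |θ| * log ((|θ| + √(θ ^ 2 + (γ * η) ^ 2)) / γ) - √(θ ^ 2 + (γ * η) ^ 2)) 0 := by
  refine ContinuousAt.sub ?_ (by fun_prop)
  rcases eq_or_ne θ 0 with rfl | hθ
  · simpa using continuousAt_const
  · refine continuousAt_const.mul (ContinuousAt.log (by fun_prop) ?_)
    have : 0 < |θ| := abs_pos.mpr hθ
    simp only [mul_zero, ne_eq, OfNat.ofNat_ne_zero, not_false_eq_true, zero_pow, add_zero,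
      sqrt_sq_eq_abs]
    positivity

lemma tendsto_log_one_div_nhdsGT_zero : Tendsto (fun η : ℝ => log (1 / η)) (𝓝[>] 0) atTop := by
  simpa only [one_div, Function.comp_def] using tendsto_log_atTop.comp tendsto_inv_nhdsGT_zero

lemma Filter.Tendsto.const_mul_add_div_self {α : Type*} {l : Filter α} {g K : α → ℝ} {L : ℝ}
    (hg : Tendsto g l atTop) (hK : Tendsto K l (𝓝 L)) (a : ℝ) :
    Tendsto (fun x => (a * g x + K x) / g x) l (𝓝 a) := by
  have h_split : ∀ᶠ x in l, a + K x / g x = (a * g x + K x) / g x := by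
    filter_upwards [hg.eventually_ne_atTop 0] with x hx
    field_simp
  simpa using (tendsto_const_nhds.add (hK.div_atTop hg)).congr' h_split

/-- Horizon asymptotics of the hyperbolic entropy (`L1` bias): for every `γ > 0` and
`θ ∈ ℝ`, `η * r_γ(θ/η) / log (1/η) → |θ|` as `η → 0⁺`, where
`r_γ(x) = x * arsinh (x/γ) - √(x² + γ²)`. -/
theorem hyperbolic_entropy_horizon (γ : ℝ) (hγ : 0 < γ) (θ : ℝ) :
    Filter.Tendsto
      (fun η : ℝ =>
        η * (θ / η * Real.arsinh (θ / η / γ) - Real.sqrt ((θ / η) ^ 2 + γ ^ 2)) /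
          Real.log (1 / η))
      (nhdsWithin 0 (Set.Ioi 0)) (nhds |θ|) := by
  change Tendsto (fun η => η * hyperbolicEntropy γ (θ / η) / log (1 / η)) (𝓝[>] 0) (𝓝 |θ|)
  have h_remainder := (continuousAt_hyperbolicEntropy_remainder hγ.ne' θ).tendsto
  refine (tendsto_log_one_div_nhdsGT_zero.const_mul_add_div_self
    (h_remainder.mono_left nhdsWithin_le_nhds) |θ|).congr' ?_
  filter_upwards [self_mem_nhdsWithin] with η hη
  rw [mul_hyperbolicEntropy_div hγ hη]
end

section
/- Horizon asymptotics of the cosh-entropy (L∞ bias): for every n ≥ 1 and every θ ∈ ℝⁿ, the limit lim_{η → 0⁺} η·arccosh(Σ_{i=1}^n cosh(θᵢ/η)) equals max_{1 ≤ i ≤ n} |θᵢ| = ‖θ‖_∞. -/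
/-- The inverse of `cosh` on `[1, ∞)`. -/
noncomputable def arcosh (x : ℝ) : ℝ := Real.log (x + Real.sqrt (x ^ 2 - 1))

lemma arcosh_cosh {x : ℝ} (hx : 0 ≤ x) : arcosh (Real.cosh x) = x := by
  have h1 : Real.cosh x ^ 2 - 1 = Real.sinh x ^ 2 := by
    have := Real.cosh_sq_sub_sinh_sq x; nlinarith
  rw [arcosh, h1, Real.sqrt_sq (Real.sinh_nonneg_iff.mpr hx), Real.cosh_add_sinh,
    Real.log_exp]

lemma arcosh_mono {a b : ℝ} (ha : 1 ≤ a) (hab : a ≤ b) : arcosh a ≤ arcosh b := by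
  have h0 : (0:ℝ) < a + Real.sqrt (a ^ 2 - 1) := by positivity
  apply Real.log_le_log h0
  have : Real.sqrt (a ^ 2 - 1) ≤ Real.sqrt (b ^ 2 - 1) := by
    apply Real.sqrt_le_sqrt; nlinarith
  linarith

lemma arcosh_le_log {x : ℝ} (hx : 1 ≤ x) : arcosh x ≤ Real.log (2 * x) := by
  apply Real.log_le_log (by positivity)
  have : Real.sqrt (x ^ 2 - 1) ≤ x := by
    rw [show x = Real.sqrt (x ^ 2) from (Real.sqrt_sq (by linarith)).symm]
    exact Real.sqrt_le_sqrt (by nlinarith [Real.sq_sqrt (show (0:ℝ) ≤ x^2 by positivity)])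
  linarith

lemma cosh_le_exp {x : ℝ} (hx : 0 ≤ x) : Real.cosh x ≤ Real.exp x := by
  rw [Real.cosh_eq]
  have : Real.exp (-x) ≤ Real.exp x := Real.exp_le_exp.mpr (by linarith)
  linarith

/-- Horizon asymptotics of the cosh-entropy (`L∞` bias): for every `n ≥ 1` and
`θ ∈ ℝⁿ`, `η * arcosh (∑ i, cosh (θᵢ/η)) → max_i |θᵢ| = ‖θ‖_∞` as `η → 0⁺`.
Here `‖θ‖` is the supremum norm on `Fin n → ℝ`. -/
theorem cosh_entropy_horizon (n : ℕ) (hn : 1 ≤ n) (θ : Fin n → ℝ) :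
    Filter.Tendsto (fun η : ℝ => η * arcosh (∑ i, Real.cosh (θ i / η)))
      (nhdsWithin 0 (Set.Ioi 0)) (nhds ‖θ‖) := by
  have hne : Nonempty (Fin n) := ⟨⟨0, hn⟩⟩
  set M := ‖θ‖ with hMdef
  have hM0 : 0 ≤ M := norm_nonneg θ
  obtain ⟨i₀, hi₀⟩ := Finite.exists_max (fun i => |θ i|)
  have hMi : M = |θ i₀| := by
    apply le_antisymm
    · exact pi_norm_le_iff_of_nonneg (abs_nonneg _) |>.mpr (fun i => by
        simpa [Real.norm_eq_abs] using hi₀ i)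
    · simpa [Real.norm_eq_abs] using norm_le_pi_norm θ i₀
  have hn1 : (1:ℝ) ≤ (n:ℝ) := by exact_mod_cast hn
  -- key bounds for η > 0
  have key : ∀ η : ℝ, 0 < η →
      M ≤ η * arcosh (∑ i, Real.cosh (θ i / η)) ∧
      η * arcosh (∑ i, Real.cosh (θ i / η)) ≤ M + η * Real.log (2 * n) := by
    intro η hη
    set S := ∑ i, Real.cosh (θ i / η) with hS
    have hMη : 0 ≤ M / η := div_nonneg hM0 hη.le
    have hcosh_le : ∀ i : Fin n, Real.cosh (θ i / η) ≤ Real.cosh (M / η) := by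
      intro i
      rw [Real.cosh_le_cosh, abs_div, abs_div, abs_of_pos hη, abs_of_nonneg hM0]
      gcongr
      rw [hMi]; exact hi₀ i
    have hlow : Real.cosh (M / η) ≤ S := by
      have h1 : Real.cosh (M / η) = Real.cosh (θ i₀ / η) := by
        rw [← Real.cosh_abs (θ i₀ / η), abs_div, abs_of_pos hη, ← hMi]
      rw [h1, hS]
      exact Finset.single_le_sum (f := fun i => Real.cosh (θ i / η))
        (fun i _ => (Real.cosh_pos _).le) (Finset.mem_univ i₀)
    have hS1 : (1:ℝ) ≤ S := le_trans (Real.one_le_cosh _) hlow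
    constructor
    · -- lower bound
      have h2 : arcosh (Real.cosh (M / η)) ≤ arcosh S :=
        arcosh_mono (Real.one_le_cosh _) hlow
      rw [arcosh_cosh hMη] at h2
      have := mul_le_mul_of_nonneg_left h2 hη.le
      rwa [mul_div_cancel₀ M hη.ne'] at this
    · -- upper bound
      have hup : S ≤ (n:ℝ) * Real.exp (M / η) := by
        calc S ≤ ∑ _i : Fin n, Real.cosh (M / η) :=
              Finset.sum_le_sum (fun i _ => hcosh_le i)
          _ = (n:ℝ) * Real.cosh (M / η) := by
              rw [Finset.sum_const, Finset.card_univ, Fintype.card_fin, nsmul_eq_mul]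
          _ ≤ (n:ℝ) * Real.exp (M / η) := by
              have := cosh_le_exp hMη
              nlinarith [Real.exp_pos (M / η)]
      have h3 : arcosh S ≤ Real.log (2 * S) := arcosh_le_log hS1
      have h4 : Real.log (2 * S) ≤ Real.log (2 * n * Real.exp (M / η)) := by
        apply Real.log_le_log (by positivity)
        nlinarith
      have h5 : Real.log (2 * n * Real.exp (M / η)) = Real.log (2 * n) + M / η := by
        rw [Real.log_mul (by positivity) (Real.exp_ne_zero _), Real.log_exp]
      have h6 : arcosh S ≤ Real.log (2 * n) + M / η := by
        rw [← h5]; exact h3.trans h4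
      have := mul_le_mul_of_nonneg_left h6 hη.le
      calc η * arcosh S ≤ η * (Real.log (2 * n) + M / η) := this
        _ = M + η * Real.log (2 * n) := by field_simp; ring
  -- squeeze
  have hupper : Filter.Tendsto (fun η : ℝ => M + η * Real.log (2 * n))
      (nhdsWithin 0 (Set.Ioi 0)) (nhds M) := by
    have h : Filter.Tendsto (fun η : ℝ => M + η * Real.log (2 * n)) (nhds 0)
        (nhds (M + 0 * Real.log (2 * n))) := by
      exact Filter.Tendsto.const_add _ ((continuous_id.mul continuous_const).tendsto 0)
    have h' := h.mono_left (nhdsWithin_le_nhds (s := Set.Ioi (0:ℝ)))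
    simpa using h'
  refine tendsto_of_tendsto_of_tendsto_of_le_of_le' (g := fun _ => M) tendsto_const_nhds hupper ?_ ?_ <;>
  · filter_upwards [self_mem_nhdsWithin] with η hη
    first
      | exact (key η hη).1
      | exact (key η hη).2
end
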